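/- arXiv:2212.12348 — 3 statements merged into one kernel-verified Lean document; each statement's English description precedes it below -/
import Mathlib

section
/- Let V and W be linear subspaces of ℝ^n of complementary dimensions with V ∩ W = {0}. Then |V ∧ W| = |V^⊥ ∧ W^⊥|, where V^⊥, W^⊥ denote orthogonal complements and |·∧·| is the wedge quantity defined via orthonormal bases (absolute determinant of the concatenated orthonormal bases). -/
/-!
Put `A = [v | w]`, `B = [v' | w']`, `Q = [w' | w]` and `P = [v | v']`; the last two are
orthogonal matrices because `w' ⟂ w` and `v ⟂ v'`. Hence `|det A| = |det (Qᵀ A)|`, and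
`Qᵀ A = [[w'ᵀ v, 0], [wᵀ v, 1]]` has determinant `det (w'ᵀ v)`. In the same way, after swapping
the two column blocks of `B`, `|det B| = |det (vᵀ w')|`, the transpose of the same `ℓ × ℓ` matrix.
-/

open Module Matrix
open scoped RealInnerProductSpace

section InnerMatrix

variable {E : Type*} [NormedAddCommGroup E] [InnerProductSpace ℝ E] {ι κ α β : Type*}

def innerMatrix (a : ι → E) (b : κ → E) : Matrix ι κ ℝ :=
  of fun i j => ⟪a i, b j⟫

theorem innerMatrix_self (a : ι → E) : innerMatrix a a = gram ℝ a := rfl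

theorem transpose_innerMatrix (a : ι → E) (b : κ → E) :
    (innerMatrix a b)ᵀ = innerMatrix b a := by
  ext i j
  exact real_inner_comm _ _

theorem innerMatrix_comp (a : ι → E) (b : κ → E) (f : α → ι) (g : β → κ) :
    innerMatrix (a ∘ f) (b ∘ g) = (innerMatrix a b).submatrix f g := rfl

theorem innerMatrix_sumElim {γ δ : Type*} (a : α → E) (b : β → E) (c : γ → E) (d : δ → E) :
    innerMatrix (Sum.elim a b) (Sum.elim c d) =
      fromBlocks (innerMatrix a c) (innerMatrix a d) (innerMatrix b c) (innerMatrix b d) := by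
  ext (i | i) (j | j) <;> rfl

theorem innerMatrix_eq_zero_of_span_eq {K : Submodule ℝ E} {a : ι → E} {b : κ → E}
    (ha : Submodule.span ℝ (Set.range a) = K) (hb : Submodule.span ℝ (Set.range b) = Kᗮ) :
    innerMatrix a b = 0 := by
  ext i j
  exact Submodule.inner_right_of_mem_orthogonal
    (ha ▸ Submodule.subset_span (Set.mem_range_self i))
    (hb ▸ Submodule.subset_span (Set.mem_range_self j))

theorem Orthonormal.sumElim {a : α → E} {b : β → E} (ha : Orthonormal ℝ a)
    (hb : Orthonormal ℝ b) (hab : innerMatrix a b = 0) : Orthonormal ℝ (Sum.elim a b) := by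
  classical
  rw [← gram_eq_one_iff_orthonormal] at ha hb ⊢
  rw [← innerMatrix_self, innerMatrix_sumElim, ← transpose_innerMatrix a b, hab,
    innerMatrix_self, innerMatrix_self, ha, hb, transpose_zero, fromBlocks_one]

end InnerMatrix

section ColumnMatrix

variable {ι α β : Type*} [Fintype ι]

def colMatrix {κ : Type*} (u : ι → EuclideanSpace ℝ κ) : Matrix κ ι ℝ :=
  of fun i j => u j i

theorem transpose_colMatrix_mul_colMatrix (a b : ι → EuclideanSpace ℝ ι) :
    (colMatrix a)ᵀ * colMatrix b = innerMatrix a b := by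
  ext i j
  simp [colMatrix, innerMatrix, mul_apply, PiLp.inner_apply, mul_comm]

theorem abs_det_colMatrix_of_orthonormal [DecidableEq ι] {q : ι → EuclideanSpace ℝ ι}
    (hq : Orthonormal ℝ q) :
    |det (colMatrix q)| = 1 := by
  have h := congrArg det <| (transpose_colMatrix_mul_colMatrix q q).trans <|
    (innerMatrix_self q).trans (gram_eq_one_iff_orthonormal.2 hq)
  rw [det_mul, det_transpose, det_one, ← sq, ← sq_abs] at h
  exact (pow_eq_one_iff_of_nonneg (abs_nonneg _) two_ne_zero).1 h

theorem abs_det_colMatrix_eq_abs_det_innerMatrix [DecidableEq ι] {q : ι → EuclideanSpace ℝ ι}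
    (hq : Orthonormal ℝ q) (u : ι → EuclideanSpace ℝ ι) :
    |det (colMatrix u)| = |det (innerMatrix q u)| := by
  rw [← transpose_colMatrix_mul_colMatrix, det_mul, det_transpose, abs_mul,
    abs_det_colMatrix_of_orthonormal hq, one_mul]

theorem abs_det_colMatrix_sumElim [DecidableEq ι] [Fintype α] [DecidableEq α] [Fintype β]
    [DecidableEq β]
    (e : ι ≃ α ⊕ β) (a : α → EuclideanSpace ℝ ι) {b : β → EuclideanSpace ℝ ι}
    {c : α → EuclideanSpace ℝ ι} (hc : Orthonormal ℝ c) (hb : Orthonormal ℝ b)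
    (hcb : innerMatrix c b = 0) :
    |det (colMatrix (Sum.elim a b ∘ e))| = |det (innerMatrix c a)| := by
  rw [abs_det_colMatrix_eq_abs_det_innerMatrix ((hc.sumElim hb hcb).comp e e.injective),
    innerMatrix_comp, det_submatrix_equiv_self, innerMatrix_sumElim, hcb, innerMatrix_self b,
    gram_eq_one_iff_orthonormal.2 hb, det_fromBlocks_zero₁₂, det_one, mul_one]

end ColumnMatrix

theorem Fin.append_comp_cast {γ : Type*} {n p q : ℕ} (h : n = p + q) (a : Fin p → γ)
    (b : Fin q → γ) :
    Fin.append a b ∘ Fin.cast h = Sum.elim a b ∘ (finCongr h).trans finSumFinEquiv.symm := by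
  ext k
  simp only [Function.comp_apply, Equiv.trans_apply, finCongr_apply]
  induction Fin.cast h k using Fin.addCases <;> simp

/-- For transverse subspaces `V, W ⊆ ℝ^n` of complementary dimensions
`ℓ` and `m`, `|V ∧ W| = |V^⊥ ∧ W^⊥|`, where `|·∧·|` is the absolute determinant of the
matrix formed by concatenating orthonormal bases. -/
theorem stmt1 (n ℓ m : ℕ) (hn : ℓ + m = n)
    (V W : Submodule ℝ (EuclideanSpace ℝ (Fin n)))
    (v : Fin ℓ → EuclideanSpace ℝ (Fin n)) (w : Fin m → EuclideanSpace ℝ (Fin n))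
    (v' : Fin m → EuclideanSpace ℝ (Fin n)) (w' : Fin ℓ → EuclideanSpace ℝ (Fin n))
    (hv : Orthonormal ℝ v) (hw : Orthonormal ℝ w)
    (hv' : Orthonormal ℝ v') (hw' : Orthonormal ℝ w')
    (hvV : Submodule.span ℝ (Set.range v) = V)
    (hwW : Submodule.span ℝ (Set.range w) = W)
    (hv'V : Submodule.span ℝ (Set.range v') = Vᗮ)
    (hw'W : Submodule.span ℝ (Set.range w') = Wᗮ) :
    |(Matrix.of fun (i j : Fin n) => Fin.append v w (Fin.cast hn.symm j) i).det| =
      |(Matrix.of fun (i j : Fin n) =>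
        Fin.append v' w' (Fin.cast (by omega : n = m + ℓ) j) i).det| := by
  change |det (colMatrix (Fin.append v w ∘ Fin.cast _))| =
    |det (colMatrix (Fin.append v' w' ∘ Fin.cast _))|
  rw [Fin.append_comp_cast, Fin.append_comp_cast, ← Sum.elim_swap (f := w'),
    Function.comp_assoc, ← Equiv.sumComm_apply, ← Equiv.coe_trans,
    abs_det_colMatrix_sumElim _ _ hw' hw
      (innerMatrix_eq_zero_of_span_eq hw'W (hwW.trans W.orthogonal_orthogonal.symm)),
    abs_det_colMatrix_sumElim _ _ hv hv' (innerMatrix_eq_zero_of_span_eq hvV hv'V),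
    ← transpose_innerMatrix, det_transpose]
end

section
/- Let S ⊂ ℝ^n be a connected one-dimensional C^1 submanifold (a C^1 curve) and let π be a one-dimensional subspace of ℝ^n, i.e. π = span{ω} for a unit vector ω. If the tangent line T_ξ S satisfies T_ξ S ∩ π^⊥ = {0} for all ξ ∈ S (equivalently, τ(ξ)·ω ≠ 0 for a unit tangent τ(ξ)), then for all distinct ξ, η ∈ S one has (ξ−η)·ω ≠ 0, i.e. ⟨ξ−η⟩ ∩ π^⊥ = {0}. -/
open RealInnerProductSpace

/-! Along the curve, `t ↦ ⟪γ t, ω⟫` has the nowhere vanishing derivative `t ↦ ⟪γ' t, ω⟫`, so by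
Rolle's theorem it is injective: two parameters with the same height `⟪·, ω⟫` coincide, and so do
their points on the curve. -/

theorem injective_of_hasDerivAt_ne_zero {f f' : ℝ → ℝ} (hf : ∀ x, HasDerivAt f (f' x) x)
    (hf' : ∀ x, f' x ≠ 0) : Function.Injective f := by
  have ne_of_lt : ∀ {a b}, a < b → f a ≠ f b := fun hab hfab =>
    let ⟨c, _, hc⟩ := exists_hasDerivAt_eq_zero hab
      (fun x _ => (hf x).continuousAt.continuousWithinAt) hfab (fun x _ => hf x)
    hf' c hc
  intro a b hfab
  by_contra hab
  rcases lt_or_gt_of_ne hab with h | h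
  exacts [ne_of_lt h hfab, ne_of_lt h hfab.symm]

theorem stmt6_general (n : ℕ) (γ : ℝ → EuclideanSpace ℝ (Fin n)) (hγ : ContDiff ℝ 1 γ)
    (ω : EuclideanSpace ℝ (Fin n))
    (hT : ∀ t : ℝ, ⟪deriv γ t, ω⟫ ≠ 0) :
    ∀ s t : ℝ, γ s ≠ γ t → ⟪γ s - γ t, ω⟫ ≠ 0 := by
  have height_hasDerivAt : ∀ t, HasDerivAt (fun t => ⟪γ t, ω⟫) ⟪deriv γ t, ω⟫ t := fun t => by
    simpa using ((hγ.differentiable one_ne_zero t).hasDerivAt.inner ℝ (hasDerivAt_const t ω))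
  intro s t hst hsub
  rw [inner_sub_left, sub_eq_zero] at hsub
  exact hst (congrArg γ (injective_of_hasDerivAt_ne_zero height_hasDerivAt hT hsub))

/-- For a connected `C¹` curve `S = γ(ℝ) ⊆ ℝ^n` and a one-dimensional
subspace `π = span{ω}` with `ω` a unit vector: if every tangent vector satisfies
`τ(ξ)·ω ≠ 0` (condition (T), i.e. `T_ξS ∩ π^⊥ = {0}`), then for all distinct points
`γ(s) ≠ γ(t)` of `S` one has `(γ(s)−γ(t))·ω ≠ 0` (condition (GT)). -/
theorem stmt6 (n : ℕ) (γ : ℝ → EuclideanSpace ℝ (Fin n)) (hγ : ContDiff ℝ 1 γ)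
    (ω : EuclideanSpace ℝ (Fin n)) (hω : ‖ω‖ = 1)
    (hT : ∀ t : ℝ, ⟪deriv γ t, ω⟫ ≠ 0) :
    ∀ s t : ℝ, γ s ≠ γ t → ⟪γ s - γ t, ω⟫ ≠ 0 :=
  stmt6_general n γ hγ ω hT
end

section
/- Let v_1,…,v_n be unit vectors in ℝ^n with |det[v_1,…,v_n]| > 0. In (ℝ^n)^n ≅ ℝ^{n²}, let π = {(x_1,…,x_n) : x_1 = x_2 = ⋯ = x_n}, an n-dimensional subspace, and let V = v_1^⊥ × v_2^⊥ × ⋯ × v_n^⊥ ⊆ (ℝ^n)^n, an n(n−1)-dimensional subspace (where v_j^⊥ ⊂ ℝ^n sits in the j-th factor). Then V and π are transverse subspaces of complementary dimensions in ℝ^{n²}, and |V ∧ π| = n^{-n/2} |det[v_1,…,v_n]|. -/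
open Module RealInnerProductSpace Matrix
set_option maxHeartbeats 1000000

/-- `n·(n−1) + n = n·n`. -/
theorem nn_cast (n : ℕ) : n * (n - 1) + n = n * n := by
  cases n with
  | zero => rfl
  | succ m => simp [Nat.succ_sub_one]; ring

/-- The vector `(e_i, e_i, …, e_i) ∈ (ℝ^n)^n ≅ ℝ^{n²}` (coordinates indexed by
`(i,j) : Fin n × Fin n`, `j` labelling the block). -/
noncomputable def diagVec (n : ℕ) (i : Fin n) : EuclideanSpace ℝ (Fin n × Fin n) :=
  (WithLp.equiv 2 (Fin n × Fin n → ℝ)).symm fun p => if p.1 = i then 1 else 0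

/-- The diagonal subspace `π = {(x_1,…,x_n) : x_1 = ⋯ = x_n} ⊆ (ℝ^n)^n`. -/
noncomputable def diagSubspace (n : ℕ) : Submodule ℝ (EuclideanSpace ℝ (Fin n × Fin n)) :=
  Submodule.span ℝ (Set.range (diagVec n))

/-- The vector of `(ℝ^n)^n` equal to `v` in the `j`-th block and `0` elsewhere. -/
noncomputable def slotVec (n : ℕ) (j : Fin n) (v : EuclideanSpace ℝ (Fin n)) :
    EuclideanSpace ℝ (Fin n × Fin n) :=
  (WithLp.equiv 2 (Fin n × Fin n → ℝ)).symm fun p => if p.2 = j then v p.1 else 0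

/-- The subspace `V = v_1^⊥ × v_2^⊥ × ⋯ × v_n^⊥ ⊆ (ℝ^n)^n`. -/
noncomputable def prodPerp (n : ℕ) (v : Fin n → EuclideanSpace ℝ (Fin n)) :
    Submodule ℝ (EuclideanSpace ℝ (Fin n × Fin n)) :=
  ⨅ j : Fin n, (Submodule.span ℝ {slotVec n j (v j)})ᗮ

section Helpers

lemma euclid_inner' {ι : Type*} [Fintype ι] (x y : EuclideanSpace ℝ ι) :
    ⟪x, y⟫ = ∑ i, x i * y i := by
  simp [PiLp.inner_apply, RCLike.inner_apply]
  exact Finset.sum_congr rfl fun i _ => mul_comm _ _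

lemma inner_eq_sum_of_mem_span {F : Type*} [NormedAddCommGroup F] [InnerProductSpace ℝ F]
    {ι : Type*} [Fintype ι] [DecidableEq ι] {b : ι → F} (hb : Orthonormal ℝ b) {y : F}
    (hy : y ∈ Submodule.span ℝ (Set.range b)) (x : F) :
    ⟪x, y⟫ = ∑ l, ⟪x, b l⟫ * ⟪b l, y⟫ := by
  induction hy using Submodule.span_induction with
  | mem z hz =>
      obtain ⟨m, rfl⟩ := hz
      simp [orthonormal_iff_ite.mp hb, Finset.sum_ite_eq', mul_ite]
  | zero => simp
  | add y z hy hz ihy ihz => simp [inner_add_right, mul_add, Finset.sum_add_distrib, ihy, ihz]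
  | smul t y hy ih =>
      simp only [inner_smul_right, ih, Finset.mul_sum]
      exact Finset.sum_congr rfl fun l _ => by ring

lemma inner_eq_sum_of_mem_span' {F : Type*} [NormedAddCommGroup F] [InnerProductSpace ℝ F]
    {ι : Type*} [Fintype ι] [DecidableEq ι] {b : ι → F} (hb : Orthonormal ℝ b) {x : F}
    (hx : x ∈ Submodule.span ℝ (Set.range b)) (y : F) :
    ⟪x, y⟫ = ∑ l, ⟪x, b l⟫ * ⟪b l, y⟫ := by
  rw [real_inner_comm y x, inner_eq_sum_of_mem_span hb hx y]
  exact Finset.sum_congr rfl fun l _ => by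
    rw [real_inner_comm y (b l), real_inner_comm (b l) x]; ring

lemma sum_inner_mul_inner_span_eq {F : Type*} [NormedAddCommGroup F] [InnerProductSpace ℝ F]
    {ι κ : Type*} [Fintype ι] [Fintype κ] [DecidableEq ι] [DecidableEq κ]
    {b : ι → F} {f : κ → F} (hb : Orthonormal ℝ b) (hf : Orthonormal ℝ f)
    (hspan : Submodule.span ℝ (Set.range b) = Submodule.span ℝ (Set.range f)) (x y : F) :
    ∑ l, ⟪x, b l⟫ * ⟪b l, y⟫ = ∑ i, ⟪x, f i⟫ * ⟪f i, y⟫ := by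
  have hbf : ∀ l, b l ∈ Submodule.span ℝ (Set.range f) := fun l =>
    hspan ▸ Submodule.subset_span (Set.mem_range_self l)
  have hfb : ∀ i, f i ∈ Submodule.span ℝ (Set.range b) := fun i =>
    hspan ▸ Submodule.subset_span (Set.mem_range_self i)
  calc ∑ l, ⟪x, b l⟫ * ⟪b l, y⟫
      = ∑ l, ∑ i, ⟪x, b l⟫ * (⟪b l, f i⟫ * ⟪f i, y⟫) := by
        refine Finset.sum_congr rfl fun l _ => ?_
        rw [inner_eq_sum_of_mem_span' hf (hbf l) y, Finset.mul_sum]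
    _ = ∑ i, (∑ l, ⟪x, b l⟫ * ⟪b l, f i⟫) * ⟪f i, y⟫ := by
        rw [Finset.sum_comm]
        simp only [Finset.sum_mul]
        exact Finset.sum_congr rfl fun i _ => Finset.sum_congr rfl fun l _ => by ring
    _ = ∑ i, ⟪x, f i⟫ * ⟪f i, y⟫ := by
        refine Finset.sum_congr rfl fun i _ => ?_
        rw [← inner_eq_sum_of_mem_span hb (hfb i) x]

lemma slotVec_apply (n : ℕ) (j : Fin n) (v : EuclideanSpace ℝ (Fin n)) (p : Fin n × Fin n) :
    slotVec n j v p = if p.2 = j then v p.1 else 0 := rfl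

lemma diagVec_apply (n : ℕ) (i : Fin n) (p : Fin n × Fin n) :
    diagVec n i p = if p.1 = i then 1 else 0 := rfl

lemma inner_slot_slot (n : ℕ) (u u' : EuclideanSpace ℝ (Fin n)) (j k : Fin n) :
    ⟪slotVec n j u, slotVec n k u'⟫ = if j = k then ⟪u, u'⟫ else 0 := by
  simp only [euclid_inner', slotVec_apply, Fintype.sum_prod_type_right]
  simp [ite_mul, mul_ite, Finset.sum_ite_eq', eq_comm]

lemma inner_diag_slot (n : ℕ) (i : Fin n) (j : Fin n) (u : EuclideanSpace ℝ (Fin n)) :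
    ⟪diagVec n i, slotVec n j u⟫ = u i := by
  simp only [euclid_inner', slotVec_apply, diagVec_apply, Fintype.sum_prod_type]
  simp [ite_mul, mul_ite, Finset.sum_ite_eq', eq_comm]

lemma inner_diag_diag (n : ℕ) (i i' : Fin n) :
    ⟪diagVec n i, diagVec n i'⟫ = if i = i' then (n : ℝ) else 0 := by
  simp only [euclid_inner', diagVec_apply, Fintype.sum_prod_type]
  simp [ite_mul, mul_ite, Finset.sum_ite_eq', eq_comm]

lemma fin_append_eq_sum_elim {m k : ℕ} {α : Type*} (a : Fin m → α) (b : Fin k → α)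
    (x : Fin (m + k)) : Fin.append a b x = Sum.elim a b (finSumFinEquiv.symm x) := by
  obtain ⟨s, rfl⟩ : ∃ s, finSumFinEquiv s = x := ⟨finSumFinEquiv.symm x, finSumFinEquiv.apply_symm_apply x⟩
  rcases s with k | k <;> simp

end Helpers

/-- For unit vectors `v_1,…,v_n ∈ ℝ^n` with `|det[v_1,…,v_n]| > 0`, the
subspaces `V = v_1^⊥ × ⋯ × v_n^⊥` (dimension `n(n−1)`) and the diagonal `π` (dimension `n`)
are transverse of complementary dimensions in `ℝ^{n²}`, and
`|V ∧ π| = n^{-n/2} |det[v_1,…,v_n]|`. -/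
theorem stmt13 (n : ℕ) (hn : 0 < n) (v : Fin n → EuclideanSpace ℝ (Fin n))
    (hv : ∀ j, ‖v j‖ = 1)
    (hdet : 0 < |(Matrix.of fun i j => v j i).det|)
    (a : Fin (n * (n - 1)) → EuclideanSpace ℝ (Fin n × Fin n))
    (b : Fin n → EuclideanSpace ℝ (Fin n × Fin n))
    (ha : Orthonormal ℝ a) (hb : Orthonormal ℝ b)
    (haV : Submodule.span ℝ (Set.range a) = prodPerp n v)
    (hbπ : Submodule.span ℝ (Set.range b) = diagSubspace n) :
    prodPerp n v ⊓ diagSubspace n = ⊥ ∧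
      finrank ℝ (prodPerp n v) + finrank ℝ (diagSubspace n) = n * n ∧
      |(Matrix.of fun (i j : Fin (n * n)) =>
          Fin.append a b (Fin.cast (nn_cast n).symm j) (finProdFinEquiv.symm i)).det|
        = (n : ℝ) ^ (-(n : ℝ) / 2) * |(Matrix.of fun i j => v j i).det| := by
  classical
  have hn' : (0:ℝ) < n := by exact_mod_cast hn
  have hnne : Nonempty (Fin n) := ⟨⟨0, hn⟩⟩
  set M : Matrix (Fin n) (Fin n) ℝ := Matrix.of fun i j => v j i with hM
  set w : Fin n → EuclideanSpace ℝ (Fin n × Fin n) := fun j => slotVec n j (v j) with hwdef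
  -- basic inner products
  have hvv : ∀ j, ⟪v j, v j⟫ = 1 := fun j => by
    rw [real_inner_self_eq_norm_sq, hv]; norm_num
  have hw : Orthonormal ℝ w := by
    rw [orthonormal_iff_ite]
    intro j k
    rw [hwdef]; rw [inner_slot_slot]
    by_cases h : j = k <;> simp [h, hvv, hv]
  -- prodPerp as orthogonal complement
  have hV : prodPerp n v = (Submodule.span ℝ (Set.range w))ᗮ := by
    rw [prodPerp, Submodule.iInf_orthogonal]
    congr 1
    rw [← Set.iUnion_singleton_eq_range, Submodule.span_iUnion]
  -- a ⟂ w
  have haw : ∀ k j, ⟪a k, w j⟫ = 0 := by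
    intro k j
    have h1 : a k ∈ (Submodule.span ℝ (Set.range w))ᗮ := by
      rw [← hV, ← haV]; exact Submodule.subset_span (Set.mem_range_self k)
    exact Submodule.inner_left_of_mem_orthogonal
      (Submodule.subset_span (Set.mem_range_self j)) h1
  -- the combined orthonormal basis
  set e : (Fin (n * (n - 1)) ⊕ Fin n) → EuclideanSpace ℝ (Fin n × Fin n) := Sum.elim a w
    with hedef
  have he : Orthonormal ℝ e := by
    rw [orthonormal_iff_ite]
    rintro (k | j) (k' | j')
    · simpa [hedef] using orthonormal_iff_ite.mp ha k k'
    · simpa [hedef] using haw k j'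
    · simpa [hedef, real_inner_comm (w j) (a k')] using haw k' j
    · simpa [hedef] using orthonormal_iff_ite.mp hw j j'
  have hcard : Fintype.card (Fin (n * (n - 1)) ⊕ Fin n)
      = finrank ℝ (EuclideanSpace ℝ (Fin n × Fin n)) := by
    simp [finrank_euclideanSpace, nn_cast n]
  have hsp : ⊤ ≤ Submodule.span ℝ (Set.range e) :=
    (he.linearIndependent.span_eq_top_of_card_eq_finrank hcard).ge
  set Bas : OrthonormalBasis (Fin (n * (n - 1)) ⊕ Fin n) ℝ (EuclideanSpace ℝ (Fin n × Fin n)) :=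
    OrthonormalBasis.mk he hsp with hBas
  have hpar : ∀ x y : EuclideanSpace ℝ (Fin n × Fin n),
      ∑ s, ⟪x, e s⟫ * ⟪e s, y⟫ = ⟪x, y⟫ := by
    intro x y
    have := Bas.sum_inner_mul_inner x y
    simpa [hBas, OrthonormalBasis.coe_mk] using this
  -- rescaled diagonal orthonormal family
  have hsqrt : Real.sqrt n * Real.sqrt n = n := Real.mul_self_sqrt (Nat.cast_nonneg n)
  have hsqrt0 : Real.sqrt n ≠ 0 := by positivity
  set f : Fin n → EuclideanSpace ℝ (Fin n × Fin n) :=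
    fun i => (Real.sqrt n)⁻¹ • diagVec n i with hfdef
  have hf : Orthonormal ℝ f := by
    rw [orthonormal_iff_ite]
    intro i i'
    rw [hfdef]
    simp only [real_inner_smul_left, real_inner_smul_right, inner_diag_diag]
    by_cases h : i = i'
    · simp only [h, if_pos rfl]
      field_simp
      simp [Real.sq_sqrt (Nat.cast_nonneg n)]
    · simp [h]
  have hfspan : Submodule.span ℝ (Set.range f) = diagSubspace n := by
    rw [diagSubspace]
    apply le_antisymm
    · rw [Submodule.span_le]
      rintro _ ⟨i, rfl⟩
      exact Submodule.smul_mem _ _ (Submodule.subset_span ⟨i, rfl⟩)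
    · rw [Submodule.span_le]
      rintro _ ⟨i, rfl⟩
      have : diagVec n i = Real.sqrt n • f i := by
        rw [hfdef]; rw [smul_smul, mul_inv_cancel₀ hsqrt0, one_smul]
      rw [this]
      exact Submodule.smul_mem _ _ (Submodule.subset_span ⟨i, rfl⟩)
  -- matrices
  set c : (Fin (n * (n - 1)) ⊕ Fin n) → EuclideanSpace ℝ (Fin n × Fin n) := Sum.elim a b
    with hcdef
  set eS : Fin (n * n) ≃ (Fin (n * (n - 1)) ⊕ Fin n) :=
    (finCongr (nn_cast n).symm).trans finSumFinEquiv.symm with heS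
  set G : Matrix (Fin (n * n)) (Fin (n * n)) ℝ := Matrix.of fun i j =>
    Fin.append a b (Fin.cast (nn_cast n).symm j) (finProdFinEquiv.symm i) with hG
  have hcol : ∀ (j i : Fin (n * n)), G i j = c (eS j) (finProdFinEquiv.symm i) := by
    intro j i
    rw [hG]
    show Fin.append a b (Fin.cast (nn_cast n).symm j) (finProdFinEquiv.symm i) = _
    rw [fin_append_eq_sum_elim, heS, hcdef]
    rfl
  set Bm : Matrix (Fin (n * (n - 1))) (Fin n) ℝ := Matrix.of fun k l => ⟪a k, b l⟫ with hBm
  set Dm : Matrix (Fin n) (Fin n) ℝ := Matrix.of fun l j => ⟪b l, w j⟫ with hDm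
  have hGtG : Gᵀ * G = Matrix.of (fun j k => ⟪c (eS j), c (eS k)⟫) := by
    ext j k
    simp only [Matrix.mul_apply, Matrix.transpose_apply, Matrix.of_apply]
    calc ∑ i, G i j * G i k
        = ∑ p : Fin n × Fin n, c (eS j) p * c (eS k) p :=
          Fintype.sum_equiv finProdFinEquiv.symm _ _ (fun i => by rw [hcol j i, hcol k i])
      _ = ⟪c (eS j), c (eS k)⟫ := (euclid_inner' _ _).symm
  have hblocks : (Matrix.of fun s t => ⟪c s, c t⟫ :
      Matrix (Fin (n * (n - 1)) ⊕ Fin n) (Fin (n * (n - 1)) ⊕ Fin n) ℝ)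
      = Matrix.fromBlocks 1 Bm Bmᵀ 1 := by
    ext s t
    rcases s with k | l <;> rcases t with k' | l'
    · simp only [Matrix.of_apply, hcdef, Sum.elim_inl, Matrix.fromBlocks_apply₁₁,
        Matrix.one_apply]
      exact orthonormal_iff_ite.mp ha k k'
    · simp only [Matrix.of_apply, hcdef, Sum.elim_inl, Sum.elim_inr,
        Matrix.fromBlocks_apply₁₂, hBm]
    · simp only [Matrix.of_apply, hcdef, Sum.elim_inl, Sum.elim_inr,
        Matrix.fromBlocks_apply₂₁, Matrix.transpose_apply, hBm]
      exact real_inner_comm _ _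
    · simp only [Matrix.of_apply, hcdef, Sum.elim_inr, Matrix.fromBlocks_apply₂₂,
        Matrix.one_apply]
      exact orthonormal_iff_ite.mp hb l l'
  have hdetsq : G.det ^ 2 = (Matrix.fromBlocks 1 Bm Bmᵀ
      (1 : Matrix (Fin n) (Fin n) ℝ)).det := by
    have h1 : (Matrix.of (fun j k => ⟪c (eS j), c (eS k)⟫) :
        Matrix (Fin (n * n)) (Fin (n * n)) ℝ)
        = (Matrix.of fun s t => ⟪c s, c t⟫).submatrix eS eS := rfl
    have h2 : (Gᵀ * G).det = G.det ^ 2 := by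
      rw [Matrix.det_mul, Matrix.det_transpose, sq]
    rw [← h2, hGtG, h1, Matrix.det_submatrix_equiv_self, hblocks]
  have hDD : (1 : Matrix (Fin n) (Fin n) ℝ) - Bmᵀ * Bm = Dm * Dmᵀ := by
    ext l m
    simp only [Matrix.sub_apply, Matrix.mul_apply, Matrix.one_apply,
      Matrix.transpose_apply, Matrix.of_apply, hBm, hDm]
    have hb' : ⟪b l, b m⟫ = (if l = m then (1:ℝ) else 0) := orthonormal_iff_ite.mp hb l m
    have hps := hpar (b l) (b m)
    rw [Fintype.sum_sum_type] at hps
    simp only [hedef, Sum.elim_inl, Sum.elim_inr] at hps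
    rw [← hb', ← hps]
    have e1 : ∀ k, ⟪a k, b l⟫ = ⟪b l, a k⟫ := fun k => real_inner_comm _ _
    have e2 : ∀ j, ⟪b m, w j⟫ = ⟪w j, b m⟫ := fun j => real_inner_comm _ _
    simp only [e1, e2]
    ring
  have hDtD : Dmᵀ * Dm = (n:ℝ)⁻¹ • (Mᵀ * M) := by
    ext j k
    simp only [Matrix.mul_apply, Matrix.smul_apply, Matrix.transpose_apply,
      Matrix.of_apply, smul_eq_mul, hDm]
    calc ∑ l, ⟪b l, w j⟫ * ⟪b l, w k⟫
        = ∑ l, ⟪w j, b l⟫ * ⟪b l, w k⟫ := by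
          exact Finset.sum_congr rfl fun l _ => by rw [real_inner_comm (b l) (w j)]
      _ = ∑ i, ⟪w j, f i⟫ * ⟪f i, w k⟫ :=
          sum_inner_mul_inner_span_eq hb hf (hbπ.trans hfspan.symm) _ _
      _ = (n:ℝ)⁻¹ * ∑ i, M i j * M i k := by
          rw [Finset.mul_sum]
          refine Finset.sum_congr rfl fun i _ => ?_
          have hwj : ⟪w j, f i⟫ = (Real.sqrt n)⁻¹ * v j i := by
            rw [hfdef]
            simp only [real_inner_smul_right]
            rw [real_inner_comm, hwdef, inner_diag_slot]
          have hwk : ⟪f i, w k⟫ = (Real.sqrt n)⁻¹ * v k i := by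
            rw [hfdef]
            simp only [real_inner_smul_left]
            rw [hwdef, inner_diag_slot]
          rw [hwj, hwk, hM]
          show (Real.sqrt n)⁻¹ * v j i * ((Real.sqrt n)⁻¹ * v k i)
            = (n:ℝ)⁻¹ * (v j i * v k i)
          have hinv : (Real.sqrt n)⁻¹ * (Real.sqrt n)⁻¹ = (n:ℝ)⁻¹ := by
            rw [← mul_inv, hsqrt]
          rw [← hinv]
          ring
  have hchain : G.det ^ 2 = ((n:ℝ)⁻¹) ^ n * M.det ^ 2 := by
    rw [hdetsq, Matrix.det_fromBlocks_one₁₁, hDD, Matrix.det_mul, Matrix.det_transpose]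
    have h3 : Dm.det * Dm.det = (Dmᵀ * Dm).det := by
      rw [Matrix.det_mul, Matrix.det_transpose]
    rw [h3, hDtD, Matrix.det_smul, Matrix.det_mul, Matrix.det_transpose, Fintype.card_fin]
    ring
  -- the absolute value identity
  have hpow : ((n:ℝ) ^ (-(n:ℝ)/2)) ^ 2 = ((n:ℝ)⁻¹) ^ n := by
    rw [← Real.rpow_natCast ((n:ℝ) ^ (-(n:ℝ)/2)) 2, ← Real.rpow_mul hn'.le]
    have h4 : -(n:ℝ)/2 * ((2:ℕ):ℝ) = -(n:ℝ) := by push_cast; ring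
    rw [h4, Real.rpow_neg hn'.le, Real.rpow_natCast, inv_pow]
  have hkey : G.det ^ 2 = ((n:ℝ) ^ (-(n:ℝ)/2) * |M.det|) ^ 2 := by
    rw [mul_pow, sq_abs, hpow, hchain]
  have habs : |G.det| = (n:ℝ) ^ (-(n:ℝ)/2) * |M.det| := by
    have h0 : 0 ≤ (n:ℝ) ^ (-(n:ℝ)/2) * |M.det| := by positivity
    calc |G.det| = Real.sqrt (G.det ^ 2) := (Real.sqrt_sq_eq_abs _).symm
      _ = Real.sqrt (((n:ℝ) ^ (-(n:ℝ)/2) * |M.det|) ^ 2) := by rw [hkey]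
      _ = _ := Real.sqrt_sq h0
  -- transversality
  have hinf : prodPerp n v ⊓ diagSubspace n = ⊥ := by
    rw [eq_bot_iff]
    intro x hx
    rw [Submodule.mem_inf] at hx
    obtain ⟨hxV, hxπ⟩ := hx
    have hdiag : ∀ p : Fin n × Fin n, x p = x (p.1, ⟨0, hn⟩) := by
      have hgen : ∀ y ∈ Submodule.span ℝ (Set.range (diagVec n)),
          ∀ p : Fin n × Fin n, y p = y (p.1, ⟨0, hn⟩) := by
        intro y hy
        induction hy using Submodule.span_induction with
        | mem z hz => obtain ⟨i, rfl⟩ := hz; intro p; simp [diagVec_apply]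
        | zero => intro p; simp
        | add y z hy hz ihy ihz => intro p; simp [PiLp.add_apply, ihy p, ihz p]
        | smul t y hy ih => intro p; simp [PiLp.smul_apply, ih p]
      exact hgen x hxπ
    set cvec : Fin n → ℝ := fun i => x (i, ⟨0, hn⟩) with hcvec
    have hMc : Mᵀ.mulVec cvec = 0 := by
      funext j
      have h1 : x ∈ (Submodule.span ℝ {w j})ᗮ := (Submodule.mem_iInf _).mp hxV j
      have hx0 : ⟪w j, x⟫ = 0 :=
        Submodule.inner_right_of_mem_orthogonal (Submodule.mem_span_singleton_self _) h1
      have hx1 : ⟪w j, x⟫ = ∑ i, v j i * cvec i := by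
        rw [hwdef, euclid_inner', Fintype.sum_prod_type]
        refine Finset.sum_congr rfl fun i _ => ?_
        simp only [slotVec_apply, ite_mul, zero_mul]
        rw [Finset.sum_ite_eq' Finset.univ j (fun j' => v j i * x (i, j'))]
        simp [hdiag (i, j), hcvec]
      have : (Mᵀ.mulVec cvec) j = ∑ i, v j i * cvec i := by
        simp [Matrix.mulVec, dotProduct, Matrix.transpose_apply, hM]
      rw [this, ← hx1, hx0]
      rfl
    have hdet' : Mᵀ.det ≠ 0 := by
      rw [Matrix.det_transpose]
      exact fun h => by simp [h] at hdet
    have hc0 : cvec = 0 := Matrix.eq_zero_of_mulVec_eq_zero hdet' hMc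
    rw [Submodule.mem_bot]
    have hx0 : ∀ p, x p = 0 := fun p => by rw [hdiag p]; exact congrFun hc0 p.1
    exact PiLp.ext hx0
  -- finrank
  have hrank : finrank ℝ (prodPerp n v) + finrank ℝ (diagSubspace n) = n * n := by
    rw [← haV, ← hbπ, finrank_span_eq_card ha.linearIndependent,
      finrank_span_eq_card hb.linearIndependent, Fintype.card_fin, Fintype.card_fin]
    exact nn_cast n
  exact ⟨hinf, hrank, habs⟩
end
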